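/- Let X be a topological vector space over ℝ, let A, B ⊆ X be non-meager Baire sets, and let U₁, U₂ ⊆ X be open sets such that A Δ U₁ and B Δ U₂ are meager. Then U₁ − U₂ ⊆ A − B; that is, for every t ∈ U₁ − U₂ one has A ∩ (t + B) ≠ ∅. -/

import Mathlib

/-!
Let `t = u₁ - u₂` with `uᵢ ∈ Uᵢ`. The open set `U₁ ∩ (t + U₂)` contains `u₁`, and up to the
meagre sets `A ∆ U₁` and `t + (B ∆ U₂)` it is contained in `A ∩ (t + B)`. A nonempty open set
in a topological vector space is meagre only if the whole space is, which the non-meagre set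
`A` rules out; hence `A ∩ (t + B)` is nonempty.
-/

open Set Pointwise Filter Topology

section TopologicalAddGroup

variable {X : Type*} [AddGroup X] [TopologicalSpace X] [IsTopologicalAddGroup X]

lemma IsMeagre.preimage_add_left {s : Set X} (hs : IsMeagre s) (a : X) :
    IsMeagre ((a + ·) ⁻¹' s) :=
  hs.preimage_of_isOpenMap (continuous_const_add a) (Homeomorph.addLeft a).isOpenMap

lemma inter_image_add_left_nonempty_of_isMeagre_symmDiff {A B U₁ U₂ : Set X} (t : X)
    (hAU₁ : IsMeagre (symmDiff A U₁)) (hBU₂ : IsMeagre (symmDiff B U₂))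
    (hV : ¬ IsMeagre (U₁ ∩ (t + ·) '' U₂)) :
    (A ∩ (t + ·) '' B).Nonempty := by
  rw [image_add_left] at hV ⊢
  by_contra hAB
  refine hV ((hAU₁.union (hBU₂.preimage_add_left (-t))).mono fun x ⟨hxU₁, hxU₂⟩ => ?_)
  by_cases hxA : x ∈ A
  · exact Or.inr (Or.inr ⟨hxU₂, fun hxB => hAB ⟨x, hxA, hxB⟩⟩)
  · exact Or.inl (Or.inr ⟨hxU₁, hxA⟩)

end TopologicalAddGroup

section TopologicalVectorSpace

variable {X : Type*} [AddCommGroup X] [TopologicalSpace X]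

lemma isMeagre_univ_of_isMeagre_of_mem_nhds_zero (𝕜 : Type*) [NontriviallyNormedField 𝕜]
    [Module 𝕜 X] [ContinuousSMul 𝕜 X] {W : Set X} (hW : W ∈ 𝓝 0)
    (hm : IsMeagre W) : IsMeagre (univ : Set X) := by
  obtain ⟨c, hc₀, hc₁⟩ := NormedField.exists_norm_lt_one 𝕜
  have hcover : univ ⊆ ⋃ n : ℕ, (c ^ n • ·) ⁻¹' W := fun x _ => by
    have hlim : Tendsto (fun n : ℕ => c ^ n • x) atTop (𝓝 0) := by
      simpa using (tendsto_pow_atTop_nhds_zero_of_norm_lt_one hc₁).smul_const x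
    obtain ⟨n, hn⟩ := (hlim.eventually_mem hW).exists
    exact mem_iUnion.2 ⟨n, hn⟩
  refine (isMeagre_iUnion fun n => ?_).mono hcover
  have hcn : c ^ n ≠ 0 := pow_ne_zero n (norm_pos_iff.1 hc₀)
  exact hm.preimage_of_isOpenMap (continuous_const_smul _) (isOpenMap_smul₀ hcn)

lemma isMeagre_univ_of_isMeagre_of_isOpen [IsTopologicalAddGroup X] (𝕜 : Type*)
    [NontriviallyNormedField 𝕜] [Module 𝕜 X] [ContinuousSMul 𝕜 X] {V : Set X} (hV : IsOpen V)
    (hne : V.Nonempty) (hm : IsMeagre V) : IsMeagre (univ : Set X) := by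
  obtain ⟨v, hv⟩ := hne
  refine isMeagre_univ_of_isMeagre_of_mem_nhds_zero 𝕜 ?_ (hm.preimage_add_left v)
  exact (continuous_const_add v).continuousAt.preimage_mem_nhds (by simpa using hV.mem_nhds hv)

end TopologicalVectorSpace

theorem piccard_key_inclusion_general
    (X : Type*) [AddCommGroup X] [Module ℝ X] [TopologicalSpace X]
    [IsTopologicalAddGroup X] [ContinuousSMul ℝ X]
    (A B U₁ U₂ : Set X)
    (hA_nonmeager : ¬ IsMeagre A)
    (hU₁ : IsOpen U₁) (hU₂ : IsOpen U₂)
    (hAU₁ : IsMeagre (symmDiff A U₁)) (hBU₂ : IsMeagre (symmDiff B U₂)) :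
    U₁ - U₂ ⊆ A - B ∧ ∀ t ∈ U₁ - U₂, (A ∩ ((fun b => t + b) '' B)).Nonempty := by
  have key : ∀ t ∈ U₁ - U₂, (A ∩ ((fun b => t + b) '' B)).Nonempty := by
    rintro _ ⟨u₁, hu₁, u₂, hu₂, rfl⟩
    have hV : IsOpen (U₁ ∩ (u₁ - u₂ + ·) '' U₂) :=
      hU₁.inter ((Homeomorph.addLeft (u₁ - u₂)).isOpenMap _ hU₂)
    have hu₁V : u₁ ∈ U₁ ∩ (u₁ - u₂ + ·) '' U₂ := ⟨hu₁, u₂, hu₂, sub_add_cancel u₁ u₂⟩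
    refine inter_image_add_left_nonempty_of_isMeagre_symmDiff _ hAU₁ hBU₂ fun hm => ?_
    exact hA_nonmeager ((isMeagre_univ_of_isMeagre_of_isOpen ℝ hV ⟨u₁, hu₁V⟩ hm).mono
      (subset_univ A))
  refine ⟨fun t ht => ?_, key⟩
  obtain ⟨_, ha, b, hb, rfl⟩ := key t ht
  exact ⟨_, ha, b, hb, add_sub_cancel_right t b⟩

/-- Key step in the proof of Piccard's theorem in a topological vector space:
if `A, B` are non-meager sets and `U₁, U₂` are open sets with `A ∆ U₁`, `B ∆ U₂`
meager, then `U₁ - U₂ ⊆ A - B`; that is, for every `t ∈ U₁ - U₂` the set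
`A ∩ (t + B)` is nonempty. -/
theorem piccard_key_inclusion
    (X : Type*) [AddCommGroup X] [Module ℝ X] [TopologicalSpace X]
    [IsTopologicalAddGroup X] [ContinuousSMul ℝ X]
    (A B U₁ U₂ : Set X)
    (hA_nonmeager : ¬ IsMeagre A) (hB_nonmeager : ¬ IsMeagre B)
    (hU₁ : IsOpen U₁) (hU₂ : IsOpen U₂)
    (hAU₁ : IsMeagre (symmDiff A U₁)) (hBU₂ : IsMeagre (symmDiff B U₂)) :
    U₁ - U₂ ⊆ A - B ∧ ∀ t ∈ U₁ - U₂, (A ∩ ((fun b => t + b) '' B)).Nonempty :=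
  piccard_key_inclusion_general X A B U₁ U₂ hA_nonmeager hU₁ hU₂ hAU₁ hBU₂
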